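/- arXiv:math/9807051 — 2 statements merged into one kernel-verified Lean document; each statement's English description precedes it below -/
import Mathlib

section
/- In GL_{h,g}(2) (generators a,b,c,d with RTT relations for R̄(h,g)), one has [a, det T] = 2g·c·det T, where det T = ad − bc − (h+g)ac. -/
/-! Modulo the relation `b c = c b + (g - h) c d - (h + g) a c`, the determinant is
`det T = a d - c b + (h - g) c d`. Moving `a` from the right to the left of each of these three
monomials with the relations for `c a`, `d a` and `b a` leaves only terms starting with `c`,
and they add up to `2 g c det T`. -/

open Matrix Kronecker
open Fin.NatCast

/-- R̄(h,g) with entries in an algebra A, as an operator on A²⊗A² via the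
identification e₁=(0,0), e₂=(0,1), e₃=(1,0), e₄=(1,1). -/
def RbarA {k A : Type*} [CommRing k] [Ring A] [Algebra k A] (h g : k) :
    Matrix (Fin 2 × Fin 2) (Fin 2 × Fin 2) A :=
  fun p q =>
    algebraMap k A
      ((!![1, h+g, -h-g, h^2-g^2;
           0, 1,   0,    h-g;
           0, 0,   1,    -h+g;
           0, 0,   0,    1] : Matrix (Fin 4) (Fin 4) k)
        (2 * p.1 + p.2 : Fin 4) (2 * q.1 + q.2 : Fin 4))

/-- T₁ = T⊗I₂ for T a 2×2 matrix with (possibly noncommuting) entries. -/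
def T1 {A : Type*} [Ring A] (T : Matrix (Fin 2) (Fin 2) A) :
    Matrix (Fin 2 × Fin 2) (Fin 2 × Fin 2) A :=
  T ⊗ₖ (1 : Matrix (Fin 2) (Fin 2) A)

/-- T₂ = I₂⊗T for T a 2×2 matrix with (possibly noncommuting) entries. -/
def T2 {A : Type*} [Ring A] (T : Matrix (Fin 2) (Fin 2) A) :
    Matrix (Fin 2 × Fin 2) (Fin 2 × Fin 2) A :=
  (1 : Matrix (Fin 2) (Fin 2) A) ⊗ₖ T

section RTT

variable {k A : Type*} [CommRing k] [Ring A] [Algebra k A]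

def IsRTT (h g : k) (T : Matrix (Fin 2) (Fin 2) A) : Prop :=
  RbarA h g * (T1 T * T2 T) = (T2 T * T1 T) * RbarA h g

def detT (h g : k) (a b c d : A) : A :=
  a * d - b * c - algebraMap k A (h + g) * (a * c)

namespace IsRTT

variable {h g : k} {a b c d : A}

theorem c_mul_a (H : IsRTT h g !![a, b; c, d]) : c * a = a * c + (h - g) • (c * c) := by
  have e := congrFun (congrFun H (1, 0)) (0, 0)
  simp [RbarA, T1, T2, mul_apply, Fintype.sum_prod_type, Fin.sum_univ_succ, one_apply,
    Algebra.algebraMap_eq_smul_one] at e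
  linear_combination (norm := module) e

theorem d_mul_a (H : IsRTT h g !![a, b; c, d]) :
    d * a = a * d + (h - g) • (c * d) - (h + g) • (c * a) := by
  have e := congrFun (congrFun H (0, 1)) (0, 1)
  simp [RbarA, T1, T2, mul_apply, Fintype.sum_prod_type, Fin.sum_univ_succ, one_apply,
    Algebra.algebraMap_eq_smul_one] at e
  linear_combination (norm := module) -e

theorem b_mul_c (H : IsRTT h g !![a, b; c, d]) :
    b * c = c * b + (g - h) • (c * d) - (h + g) • (a * c) := by
  have e := congrFun (congrFun H (1, 0)) (0, 1)
  simp [RbarA, T1, T2, mul_apply, Fintype.sum_prod_type, Fin.sum_univ_succ, one_apply,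
    Algebra.algebraMap_eq_smul_one] at e
  linear_combination (norm := module) -e

theorem b_mul_a (H : IsRTT h g !![a, b; c, d]) :
    b * a = a * b + (h + g) • (a * d) - (h + g) • (c * b) + (h ^ 2 - g ^ 2) • (c * d)
      - (h + g) • (a * a) := by
  have e := congrFun (congrFun H (0, 0)) (0, 1)
  simp [RbarA, T1, T2, mul_apply, Fintype.sum_prod_type, Fin.sum_univ_succ, one_apply,
    Algebra.algebraMap_eq_smul_one] at e
  linear_combination (norm := module) -e

theorem detT_eq (H : IsRTT h g !![a, b; c, d]) :
    detT h g a b c d = a * d - c * b + (h - g) • (c * d) := by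
  rw [detT, H.b_mul_c, ← Algebra.smul_def]
  module

theorem a_mul_detT_sub_detT_mul_a (H : IsRTT h g !![a, b; c, d]) :
    a * detT h g a b c d - detT h g a b c d * a = (2 * g) • (c * detT h g a b c d) := by
  have hda := congrArg (a * ·) H.d_mul_a
  have hba := congrArg (c * ·) H.b_mul_a
  have hcab := congrArg (· * b) H.c_mul_a
  have hcda := congrArg (c * ·) H.d_mul_a
  have hcaa := congrArg (· * a) H.c_mul_a
  simp only [mul_add, add_mul, mul_sub, mul_smul_comm, smul_mul_assoc, mul_assoc]
    at hda hba hcab hcda hcaa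
  rw [H.detT_eq]
  simp only [mul_add, add_mul, mul_sub, sub_mul, mul_smul_comm, smul_mul_assoc, mul_assoc]
  linear_combination (norm := module) hba + hcab - hda - (h - g) • hcda - (h + g) • hcaa

end IsRTT

end RTT

/-- In GL_{h,g}(2) (generators a,b,c,d with RTT relations for R̄(h,g)),
[a, det T] = 2g·c·det T, where det T = ad − bc − (h+g)ac. -/
theorem a_detT_commutator (k A : Type*) [CommRing k] [Ring A] [Algebra k A]
    (h g : k) (a b c d : A)
    (hRTT : RbarA h g * (T1 !![a, b; c, d] * T2 !![a, b; c, d]) =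
            (T2 !![a, b; c, d] * T1 !![a, b; c, d]) * RbarA h g) :
    a * (a * d - b * c - algebraMap k A (h + g) * (a * c)) -
      (a * d - b * c - algebraMap k A (h + g) * (a * c)) * a =
    algebraMap k A (2 * g) * (c * (a * d - b * c - algebraMap k A (h + g) * (a * c))) := by
  have H := IsRTT.a_mul_detT_sub_detT_mul_a hRTT
  rwa [Algebra.smul_def] at H
end

section
/- In GL_{h,g}(2), [d, det T] = −2g·c·det T and [b, det T] = 2g·((det T)·d − a·(det T)), where det T = ad − bc − (h+g)ac. In particular, when g = 0 the element det T is central. -/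
open Matrix Kronecker
open Fin.NatCast

/-!
The RTT relations can be solved for every product of two generators taken out of the order
`a < b < c < d`, which turns them into a rewriting system bringing any word to a combination of
ordered monomials. Bringing both sides of each identity to this normal form proves it; in this way
`[c, det T] = 0` and `[a, det T] = -[d, det T] = 2g·c·det T`, so for `g = 0` the quantum
determinant commutes with all four generators.
-/

/-- Lets `simp` apply a relation `x * y = z` inside right-associated products. -/
theorem mul_mul_eq_of_mul_eq {M : Type*} [Semigroup M] {x y z : M} (hxy : x * y = z) (w : M) :
    x * (y * w) = z * w := by
  rw [← mul_assoc, hxy]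

section GLhg

variable {k A : Type*} [CommRing k] [Ring A] [Algebra k A]

/-- The RTT relations of `GL_{h,g}(2)` for `T = !![a, b; c, d]`, solved for the products of
generators out of the order `a < b < c < d`. -/
structure IsGLhgMatrix (h g : k) (a b c d : A) : Prop where
  c_mul_a : c * a = a * c + (h - g) • (c * c)
  d_mul_c : d * c = c * d - (h + g) • (c * c)
  d_mul_a : d * a = a * d - (h + g) • (a * c) - ((h + g) * (h - g)) • (c * c) + (h - g) • (c * d)
  c_mul_b : c * b = b * c + (h + g) • (a * c) + (h - g) • (c * d)
  b_mul_a : b * a =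
    a * b - (h + g) • (a * a) + (h + g) • (a * d) - (h + g) • (b * c) - ((h + g) ^ 2) • (a * c)
  d_mul_b : d * b =
    b * d + (h - g) • (b * c) + ((h + g) * (h - g)) • (a * c) - (h - g) • (a * d) +
      (h - g) • (d * d)

def quantumDet (h g : k) (a b c d : A) : A :=
  a * d - b * c - (h + g) • (a * c)

variable {h g : k} {a b c d : A}

theorem IsGLhgMatrix.of_rtt
    (hRTT : RbarA h g * (T1 !![a, b; c, d] * T2 !![a, b; c, d]) =
      (T2 !![a, b; c, d] * T1 !![a, b; c, d]) * RbarA h g) :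
    IsGLhgMatrix h g a b c d := by
  -- `eij` is the `(i, j)` entry, numbered `0, …, 3` as in `RbarA`
  have entry := fun p q => congrFun (congrFun hRTT p) q
  have e01 := entry (0, 0) (0, 1)
  have e10 := entry (0, 1) (0, 0)
  have e11 := entry (0, 1) (0, 1)
  have e13 := entry (0, 1) (1, 1)
  have e21 := entry (1, 0) (0, 1)
  have e31 := entry (1, 1) (0, 1)
  simp only [T1, T2, Fin.isValue, Matrix.mul_apply, RbarA, Fin.coe_ofNat_eq_mod, Nat.zero_mod,
    Nat.cast_zero, mul_zero, add_zero, of_apply, cons_val', cons_val_fin_one, cons_val_zero,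
    Algebra.algebraMap_eq_smul_one, kroneckerMap_apply, Matrix.one_apply, mul_ite, mul_one,
    cons_val_one, ite_mul, one_mul, zero_mul, Fintype.sum_prod_type, Finset.sum_ite_irrel,
    Finset.sum_ite_eq, Finset.mem_univ, ↓reduceIte, Finset.sum_const_zero, Finset.sum_ite_eq',
    Algebra.smul_mul_assoc, Fin.sum_univ_two, Nat.mod_succ, Nat.cast_one, one_smul, zero_add,
    cons_val, Fin.reduceAdd, Algebra.mul_smul_comm, zero_smul] at e01 e10 e11 e13 e21 e31
  exact
    { c_mul_a := by linear_combination (norm := module) -e10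
      d_mul_c := by linear_combination (norm := module) -e31
      d_mul_a := by linear_combination (norm := module) -e11 + (h + g) • e10
      c_mul_b := by linear_combination (norm := module) e21
      b_mul_a := by linear_combination (norm := module) -e01 - (h + g) • e21
      d_mul_b := by linear_combination (norm := module) -e13 + (h - g) • e11 + (h - g) • e21 }

namespace IsGLhgMatrix

variable (H : IsGLhgMatrix h g a b c d)
include H

theorem lie_c_quantumDet : ⁅c, quantumDet h g a b c d⁆ = 0 := by
  simp only [quantumDet, Ring.lie_def, mul_sub, sub_mul, mul_add, add_mul, smul_mul_assoc,
    mul_smul_comm, smul_sub, smul_add, smul_smul, mul_assoc,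
    H.d_mul_c, mul_mul_eq_of_mul_eq H.c_mul_a, mul_mul_eq_of_mul_eq H.c_mul_b]
  module

theorem lie_a_quantumDet :
    ⁅a, quantumDet h g a b c d⁆ = (2 * g) • (c * quantumDet h g a b c d) := by
  simp only [quantumDet, Ring.lie_def, mul_sub, sub_mul, mul_add, add_mul, smul_mul_assoc,
    mul_smul_comm, smul_sub, smul_add, smul_smul, mul_assoc,
    H.c_mul_a, H.d_mul_c, H.d_mul_a, mul_mul_eq_of_mul_eq H.c_mul_a, mul_mul_eq_of_mul_eq H.c_mul_b,
    mul_mul_eq_of_mul_eq H.b_mul_a]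
  module

theorem lie_d_quantumDet :
    ⁅d, quantumDet h g a b c d⁆ = -((2 * g) • (c * quantumDet h g a b c d)) := by
  simp only [quantumDet, Ring.lie_def, mul_sub, sub_mul, mul_add, add_mul, smul_mul_assoc,
    mul_smul_comm, smul_sub, smul_add, smul_smul, mul_assoc,
    H.d_mul_c, mul_mul_eq_of_mul_eq H.c_mul_a, mul_mul_eq_of_mul_eq H.d_mul_c,
    mul_mul_eq_of_mul_eq H.d_mul_a, mul_mul_eq_of_mul_eq H.c_mul_b, mul_mul_eq_of_mul_eq H.d_mul_b]
  module

theorem lie_b_quantumDet :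
    ⁅b, quantumDet h g a b c d⁆ =
      (2 * g) • (quantumDet h g a b c d * d - a * quantumDet h g a b c d) := by
  simp only [quantumDet, Ring.lie_def, mul_sub, sub_mul, mul_add, add_mul, smul_mul_assoc,
    mul_smul_comm, smul_sub, smul_add, smul_smul, mul_assoc,
    H.c_mul_b, H.d_mul_b, mul_mul_eq_of_mul_eq H.b_mul_a]
  module

end IsGLhgMatrix

theorem IsGLhgMatrix.commute_quantumDet_of_g_eq_zero (H : IsGLhgMatrix h 0 a b c d) {x : A}
    (hx : x ∈ ({a, b, c, d} : Set A)) : Commute x (quantumDet h 0 a b c d) := by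
  rw [commute_iff_lie_eq]
  rcases hx with rfl | rfl | rfl | rfl
  · simp [H.lie_a_quantumDet]
  · simp [H.lie_b_quantumDet]
  · exact H.lie_c_quantumDet
  · simp [H.lie_d_quantumDet]

end GLhg

/-- In GL_{h,g}(2): [d, det T] = −2g·c·det T and
[b, det T] = 2g·((det T)·d − a·(det T)); in particular for g = 0 the quantum
determinant det T = ad − bc − (h+g)ac is central. -/
theorem d_b_detT_commutators (k A : Type*) [CommRing k] [Ring A] [Algebra k A]
    (h g : k) (a b c d : A)
    (hRTT : RbarA h g * (T1 !![a, b; c, d] * T2 !![a, b; c, d]) =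
            (T2 !![a, b; c, d] * T1 !![a, b; c, d]) * RbarA h g) :
    (d * (a * d - b * c - algebraMap k A (h + g) * (a * c)) -
       (a * d - b * c - algebraMap k A (h + g) * (a * c)) * d =
     -(algebraMap k A (2 * g) *
        (c * (a * d - b * c - algebraMap k A (h + g) * (a * c))))) ∧
    (b * (a * d - b * c - algebraMap k A (h + g) * (a * c)) -
       (a * d - b * c - algebraMap k A (h + g) * (a * c)) * b =
     algebraMap k A (2 * g) *
       ((a * d - b * c - algebraMap k A (h + g) * (a * c)) * d -
        a * (a * d - b * c - algebraMap k A (h + g) * (a * c)))) ∧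
    (g = 0 → ∀ x ∈ ({a, b, c, d} : Set A),
      x * (a * d - b * c - algebraMap k A (h + g) * (a * c)) =
        (a * d - b * c - algebraMap k A (h + g) * (a * c)) * x) := by
  have H := IsGLhgMatrix.of_rtt hRTT
  have hdet : a * d - b * c - algebraMap k A (h + g) * (a * c) = quantumDet h g a b c d := by
    rw [quantumDet, Algebra.smul_def]
  rw [hdet]
  simp only [← Algebra.smul_def, ← Ring.lie_def]
  refine ⟨H.lie_d_quantumDet, H.lie_b_quantumDet, ?_⟩
  rintro rfl x hx
  exact (H.commute_quantumDet_of_g_eq_zero hx).eq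
end
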